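/- Let S, V, X₁, X₂, Y be jointly distributed random variables taking values in finite sets such that the pair (X₁,X₂) is independent of S and V ↔ (S,X₁,X₂) ↔ Y is a Markov chain, i.e., I(V ; Y | S,X₁,X₂) = 0. Then I(V,X₁,X₂ ; Y) - I(V,X₁,X₂ ; S) = I(X₁,X₂ ; Y) - I(V ; S | X₁,X₂,Y); in particular I(V,X₁,X₂ ; Y) - I(V,X₁,X₂ ; S) ≤ I(X₁,X₂ ; Y), so the sum-rate bound of the outer bound of Theorem 2 is at least as tight as that of Proposition 1. -/

import Mathlib

open scoped BigOperators
open Classical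

noncomputable section

/-- Probability that the random variable `X` equals `x` under the pmf `p`. -/
def pr {Ω α : Type*} [Fintype Ω] (p : Ω → ℝ) (X : Ω → α) (x : α) : ℝ :=
  ∑ ω : Ω, if X ω = x then p ω else 0

/-- Shannon entropy (in bits), with the convention `0 · log₂ 0 = 0`. -/
def ent {Ω α : Type*} [Fintype Ω] (p : Ω → ℝ) (X : Ω → α) : ℝ :=
  -∑ x ∈ Finset.univ.image X, pr p X x * Real.logb 2 (pr p X x)

/-- Conditional entropy `H(X|Y) = H(X,Y) - H(Y)`. -/
def condEnt {Ω α β : Type*} [Fintype Ω] (p : Ω → ℝ) (X : Ω → α) (Y : Ω → β) : ℝ :=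
  ent p (fun ω => (X ω, Y ω)) - ent p Y

/-- Mutual information `I(X;Y) = H(X) + H(Y) - H(X,Y)`. -/
def mi {Ω α β : Type*} [Fintype Ω] (p : Ω → ℝ) (X : Ω → α) (Y : Ω → β) : ℝ :=
  ent p X + ent p Y - ent p (fun ω => (X ω, Y ω))

/-- Conditional mutual information `I(X;Y|Z) = H(X,Z) + H(Y,Z) - H(X,Y,Z) - H(Z)`. -/
def cmi {Ω α β γ : Type*} [Fintype Ω] (p : Ω → ℝ) (X : Ω → α) (Y : Ω → β) (Z : Ω → γ) : ℝ :=
  ent p (fun ω => (X ω, Z ω)) + ent p (fun ω => (Y ω, Z ω))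
    - ent p (fun ω => (X ω, Y ω, Z ω)) - ent p Z

/-- `p` is a probability mass function on the finite sample space `Ω`. -/
def IsPMF {Ω : Type*} [Fintype Ω] (p : Ω → ℝ) : Prop :=
  (∀ ω, 0 ≤ p ω) ∧ ∑ ω : Ω, p ω = 1

/-- The random variables `X` and `Y` are independent under `p`. -/
def IndepRV {Ω α β : Type*} [Fintype Ω] (p : Ω → ℝ) (X : Ω → α) (Y : Ω → β) : Prop :=
  ∀ x y, pr p (fun ω => (X ω, Y ω)) (x, y) = pr p X x * pr p Y y

end

/-! Expanding every information quantity into joint entropies, independence gives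
`H(S,X₁,X₂) = H(X₁,X₂) + H(S)` and the Markov condition gives
`H(V,S,X₁,X₂,Y) = H(V,S,X₁,X₂) + H(S,X₁,X₂,Y) - H(S,X₁,X₂)`; with these the identity is linear
arithmetic in entropies. The inequality follows because conditional mutual information is
nonnegative: `I(A;B|C)` is the relative entropy of `p(a,b,c)` from `p(a,c) p(b,c) / p(c)`, which
is nonnegative by Gibbs' inequality. -/

open Finset Real

namespace Real

lemma mul_logb_sub_logb_le {b q r : ℝ} (hb : 1 < b) (hq : 0 ≤ q) (hr : 0 ≤ r)
    (hqr : 0 < q → 0 < r) : q * (logb b r - logb b q) ≤ (r - q) / log b := by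
  rcases hq.eq_or_lt with rfl | hq
  · simpa using div_nonneg hr (log_pos hb).le
  have hr := hqr hq
  rw [← logb_div hr.ne' hq.ne', logb, mul_div_assoc', div_le_div_iff_of_pos_right (log_pos hb)]
  calc q * log (r / q) ≤ q * (r / q - 1) :=
        mul_le_mul_of_nonneg_left (log_le_sub_one_of_pos (by positivity)) hq.le
    _ = r - q := by field_simp

/-- Gibbs' inequality. -/
theorem sum_mul_logb_le_sum_mul_logb {ι : Type*} {b : ℝ} (hb : 1 < b) (s : Finset ι)
    {q r : ι → ℝ} (hq : ∀ i ∈ s, 0 ≤ q i) (hr : ∀ i ∈ s, 0 ≤ r i)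
    (hqr : ∀ i ∈ s, 0 < q i → 0 < r i) (hsum : ∑ i ∈ s, r i ≤ ∑ i ∈ s, q i) :
    ∑ i ∈ s, q i * logb b (r i) ≤ ∑ i ∈ s, q i * logb b (q i) := by
  have key := sum_le_sum fun i hi => mul_logb_sub_logb_le hb (hq i hi) (hr i hi) (hqr i hi)
  rw [← sum_div, sum_sub_distrib] at key
  simp only [mul_sub, sum_sub_distrib] at key
  have : (∑ i ∈ s, r i - ∑ i ∈ s, q i) / log b ≤ 0 :=
    div_nonpos_of_nonpos_of_nonneg (sub_nonpos.2 hsum) (log_pos hb).le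
  linarith

end Real

section
variable {Ω α β γ : Type*} [Fintype Ω] {p : Ω → ℝ}

lemma le_pr_self (hp : ∀ ω, 0 ≤ p ω) (X : Ω → α) (ω : Ω) : p ω ≤ pr p X (X ω) := by
  unfold pr
  simpa using single_le_sum (f := fun ω' => if X ω' = X ω then p ω' else 0)
    (fun ω' _ => by split_ifs <;> simp [hp ω']) (mem_univ ω)

lemma pr_nonneg (hp : ∀ ω, 0 ≤ p ω) (X : Ω → α) (x : α) : 0 ≤ pr p X x :=
  sum_nonneg fun ω _ => by split_ifs <;> simp [hp ω]

lemma pr_le_pr_comp (hp : ∀ ω, 0 ≤ p ω) (X : Ω → α) (f : α → β) (x : α) :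
    pr p X x ≤ pr p (fun ω => f (X ω)) (f x) :=
  sum_le_sum fun ω _ => by split_ifs <;> simp_all

lemma sum_pr_mul (X : Ω → α) (s : Finset α) (hs : ∀ ω, X ω ∈ s) (f : α → ℝ) :
    ∑ x ∈ s, pr p X x * f x = ∑ ω, p ω * f (X ω) := by
  simp only [pr, sum_mul, ite_mul, zero_mul]
  rw [sum_comm]
  exact sum_congr rfl fun ω _ => by simp [eq_comm, hs ω]

lemma sum_pr [Fintype α] (X : Ω → α) : ∑ x, pr p X x = ∑ ω, p ω := by
  simpa using sum_pr_mul X univ (fun ω => mem_univ _) fun _ => 1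

lemma sum_pr_pair_left [Fintype α] (X : Ω → α) (Y : Ω → β) (y : β) :
    ∑ x, pr p (fun ω => (X ω, Y ω)) (x, y) = pr p Y y := by
  unfold pr
  rw [sum_comm]
  exact sum_congr rfl fun ω _ => by simp [Prod.ext_iff, ite_and]

lemma ent_eq_neg_sum_mul_logb (X : Ω → α) :
    ent p X = -∑ ω, p ω * logb 2 (pr p X (X ω)) := by
  rw [ent, sum_pr_mul X _ (fun ω => mem_image_of_mem X (mem_univ ω)) fun x => logb 2 (pr p X x)]

lemma ent_congr {X : Ω → α} {Y : Ω → β} (h : ∀ ω ω', X ω = X ω' ↔ Y ω = Y ω') :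
    ent p X = ent p Y := by
  simp only [ent_eq_neg_sum_mul_logb, pr, h]

lemma ent_pair_of_indepRV (hp : ∀ ω, 0 ≤ p ω) {X : Ω → α} {Y : Ω → β}
    (h : IndepRV p X Y) : ent p (fun ω => (X ω, Y ω)) = ent p X + ent p Y := by
  simp only [ent_eq_neg_sum_mul_logb]
  rw [← neg_add, ← sum_add_distrib]
  congr 1
  refine sum_congr rfl fun ω _ => ?_
  rcases (hp ω).eq_or_lt with h0 | hpos
  · simp [← h0]
  rw [h, logb_mul (hpos.trans_le (le_pr_self hp X ω)).ne' (hpos.trans_le (le_pr_self hp Y ω)).ne',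
    mul_add]

theorem cmi_nonneg [Fintype α] [Fintype β] [Fintype γ] (hp : ∀ ω, 0 ≤ p ω)
    (A : Ω → α) (B : Ω → β) (C : Ω → γ) : 0 ≤ cmi p A B C := by
  set q := pr p (fun ω => (A ω, B ω, C ω))
  set r : α × β × γ → ℝ := fun x =>
    pr p (fun ω => (A ω, C ω)) (x.1, x.2.2) * pr p (fun ω => (B ω, C ω)) x.2 / pr p C x.2.2
  have hr_sum : ∑ x, r x = ∑ x, q x := calc
    ∑ x, r x = ∑ c, (∑ a, pr p (fun ω => (A ω, C ω)) (a, c))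
        * (∑ b, pr p (fun ω => (B ω, C ω)) (b, c)) / pr p C c := by
      simp only [r, Fintype.sum_prod_type, sum_mul_sum, sum_div]
      exact sum_comm_cycle
    _ = ∑ c, pr p C c := by simp only [sum_pr_pair_left, mul_self_div_self]
    _ = ∑ x, q x := by rw [sum_pr, sum_pr]
  have hqr (x) (hx : 0 < q x) : 0 < r x := by
    have hac := hx.trans_le (pr_le_pr_comp hp _ (fun x : α × β × γ => (x.1, x.2.2)) x)
    have hbc := hx.trans_le (pr_le_pr_comp hp _ (fun x : α × β × γ => x.2) x)
    have hc := hx.trans_le (pr_le_pr_comp hp _ (fun x : α × β × γ => x.2.2) x)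
    exact div_pos (mul_pos hac hbc) hc
  have gibbs := sum_mul_logb_le_sum_mul_logb one_lt_two univ (fun x _ => pr_nonneg hp _ x)
    (fun x _ => div_nonneg (mul_nonneg (pr_nonneg hp _ _) (pr_nonneg hp _ _)) (pr_nonneg hp _ _))
    (fun x _ => hqr x) hr_sum.le
  have hq_log : ∑ x, q x * logb 2 (q x) = -ent p (fun ω => (A ω, B ω, C ω)) := by
    rw [sum_pr_mul _ univ (fun _ => mem_univ _), ent_eq_neg_sum_mul_logb, neg_neg]
  have hr_log : ∑ x, q x * logb 2 (r x) =
      -ent p (fun ω => (A ω, C ω)) - ent p (fun ω => (B ω, C ω)) + ent p C := by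
    rw [sum_pr_mul _ univ (fun _ => mem_univ _)]
    simp only [ent_eq_neg_sum_mul_logb, neg_neg, sub_neg_eq_add, ← sub_eq_add_neg,
      ← sum_add_distrib, ← sum_sub_distrib, ← mul_add, ← mul_sub]
    refine sum_congr rfl fun ω _ => ?_
    rcases (hp ω).eq_or_lt with h0 | hpos
    · simp [← h0]
    have hac := (hpos.trans_le (le_pr_self hp (fun ω => (A ω, C ω)) ω)).ne'
    have hbc := (hpos.trans_le (le_pr_self hp (fun ω => (B ω, C ω)) ω)).ne'
    have hc := (hpos.trans_le (le_pr_self hp C ω)).ne'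
    rw [logb_div (mul_ne_zero hac hbc) hc, logb_mul hac hbc]
  unfold cmi
  linarith

end

/-- If `(X₁,X₂)` is independent of `S` and `V ↔ (S,X₁,X₂) ↔ Y` is a Markov chain, then
`I(V,X₁,X₂ ; Y) - I(V,X₁,X₂ ; S) = I(X₁,X₂ ; Y) - I(V ; S | X₁,X₂,Y)`, and in particular
`I(V,X₁,X₂ ; Y) - I(V,X₁,X₂ ; S) ≤ I(X₁,X₂ ; Y)`. -/
theorem sum_rate_bound_comparison
    {Ω 𝒮 𝒱 𝒳₁ 𝒳₂ 𝒴 : Type*} [Fintype Ω] [Fintype 𝒮] [Fintype 𝒱]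
    [Fintype 𝒳₁] [Fintype 𝒳₂] [Fintype 𝒴]
    (p : Ω → ℝ) (hp : IsPMF p)
    (S : Ω → 𝒮) (V : Ω → 𝒱) (X₁ : Ω → 𝒳₁) (X₂ : Ω → 𝒳₂) (Y : Ω → 𝒴)
    (hIndep : IndepRV p (fun ω => (X₁ ω, X₂ ω)) S)
    (hMarkov : cmi p V Y (fun ω => (S ω, X₁ ω, X₂ ω)) = 0) :
    (mi p (fun ω => (V ω, X₁ ω, X₂ ω)) Y - mi p (fun ω => (V ω, X₁ ω, X₂ ω)) S
        = mi p (fun ω => (X₁ ω, X₂ ω)) Y - cmi p V S (fun ω => (X₁ ω, X₂ ω, Y ω))) ∧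
    mi p (fun ω => (V ω, X₁ ω, X₂ ω)) Y - mi p (fun ω => (V ω, X₁ ω, X₂ ω)) S
      ≤ mi p (fun ω => (X₁ ω, X₂ ω)) Y := by
  have hTS := ent_pair_of_indepRV hp.1 hIndep
  have e₁ : ent p (fun ω => ((V ω, X₁ ω, X₂ ω), Y ω)) = ent p (fun ω => (V ω, X₁ ω, X₂ ω, Y ω)) :=
    ent_congr fun _ _ => by simp only [Prod.mk.injEq]; tauto
  have e₂ : ent p (fun ω => ((V ω, X₁ ω, X₂ ω), S ω)) = ent p (fun ω => (V ω, S ω, X₁ ω, X₂ ω)) :=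
    ent_congr fun _ _ => by simp only [Prod.mk.injEq]; tauto
  have e₃ : ent p (fun ω => ((X₁ ω, X₂ ω), Y ω)) = ent p (fun ω => (X₁ ω, X₂ ω, Y ω)) :=
    ent_congr fun _ _ => by simp only [Prod.mk.injEq]; tauto
  have e₄ : ent p (fun ω => (Y ω, S ω, X₁ ω, X₂ ω)) = ent p (fun ω => (S ω, X₁ ω, X₂ ω, Y ω)) :=
    ent_congr fun _ _ => by simp only [Prod.mk.injEq]; tauto
  have e₅ : ent p (fun ω => (V ω, Y ω, S ω, X₁ ω, X₂ ω))
      = ent p (fun ω => (V ω, S ω, X₁ ω, X₂ ω, Y ω)) :=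
    ent_congr fun _ _ => by simp only [Prod.mk.injEq]; tauto
  have e₆ : ent p (fun ω => ((X₁ ω, X₂ ω), S ω)) = ent p (fun ω => (S ω, X₁ ω, X₂ ω)) :=
    ent_congr fun _ _ => by simp only [Prod.mk.injEq]; tauto
  have identity : mi p (fun ω => (V ω, X₁ ω, X₂ ω)) Y - mi p (fun ω => (V ω, X₁ ω, X₂ ω)) S
      = mi p (fun ω => (X₁ ω, X₂ ω)) Y - cmi p V S (fun ω => (X₁ ω, X₂ ω, Y ω)) := by
    simp only [mi, cmi] at hMarkov ⊢
    linarith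
  exact ⟨identity, identity ▸ sub_le_self _ (cmi_nonneg hp.1 V S _)⟩
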